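/- arXiv:2005.01088 — 2 statements merged into one kernel-verified Lean document; each statement's English description precedes it below -/
import Mathlib

section
/- Let C be an open convex subset of a real Banach space E, let F be an order complete Banach space, and let Φ : C → F be a continuous convex function. Then Φ is the upper envelope of its continuous affine minorants: for every x ∈ C, Φ(x) = sup { T(x) + c : T : E → F continuous linear, c ∈ F, and T(y) + c ≤ Φ(y) for all y ∈ C }. -/
/-!
Fix `x ∈ C`. By convexity the difference quotients `t⁻¹ • (Φ (x + t • v) - Φ x)` decrease as
`t ↓ 0`, and they are bounded below by `-(s⁻¹ • (Φ (x - s • v) - Φ x))`, so order completeness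
gives a directional derivative `p v`, their infimum. It is sublinear, so the Hahn–Banach theorem
for maps into an order complete space yields a linear `g ≤ p`; then `g (y - x) ≤ Φ y - Φ x`
on `C`, i.e. `y ↦ g (y - x) + Φ x` is an affine minorant touching `Φ` at `x`. Squeezing
`g v` between `Φ x - Φ (x - v)` and `Φ (x + v) - Φ x` shows, by continuity of `Φ` and
monotonicity of the norm, that `g` is continuous.
-/

open Set Filter Topology
open scoped Pointwise

theorem exists_isGLB_of_exists_isLUB {F : Type*} [AddCommGroup F] [PartialOrder F]
    [IsOrderedAddMonoid F] (hcomp : ∀ S : Set F, S.Nonempty → BddAbove S → ∃ b, IsLUB S b)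
    {S : Set F} (hne : S.Nonempty) (hbdd : BddBelow S) : ∃ b, IsGLB S b := by
  obtain ⟨b, hb⟩ := hcomp (-S) hne.neg hbdd.neg
  exact ⟨-b, isLUB_neg.1 hb⟩

section HahnBanach

variable {E F : Type*} [AddCommGroup E] [Module ℝ E]
  [AddCommGroup F] [PartialOrder F] [IsOrderedAddMonoid F] [Module ℝ F] [PosSMulMono ℝ F]
  {p : E → F}

theorem LinearPMap.exists_lt_forall_le_of_sublinear
    (hcomp : ∀ S : Set F, S.Nonempty → BddAbove S → ∃ b, IsLUB S b)
    (hp_smul : ∀ c : ℝ, 0 < c → ∀ v, p (c • v) = c • p v)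
    (hp_add : ∀ u v, p (u + v) ≤ p u + p v)
    (f : E →ₗ.[ℝ] F) (hf : ∀ z : f.domain, f z ≤ p z) (hdom : f.domain ≠ ⊤) :
    ∃ g : E →ₗ.[ℝ] F, f < g ∧ ∀ z : g.domain, g z ≤ p z := by
  obtain ⟨y, -, hy⟩ := SetLike.exists_of_lt (lt_top_iff_ne_top.2 hdom)
  -- Extending by `y ↦ b` stays below `p` on the positive and on the negative side of `y`
  -- exactly when `f z - p (z - y) ≤ b ≤ p (w + y) - f w` for all `z, w`; subadditivity makes
  -- every left-hand side smaller than every right-hand side.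
  have hsep : ∀ z w : f.domain, f z - p (z - y) ≤ p (w + y) - f w := by
    intro z w
    rw [sub_le_sub_iff, ← f.map_add]
    calc f (z + w) ≤ p (z + w) := hf _
      _ ≤ p ((z : E) - y) + p ((w : E) + y) := by
          simpa only [sub_add_add_cancel] using hp_add ((z : E) - y) ((w : E) + y)
      _ = p ((w : E) + y) + p ((z : E) - y) := add_comm _ _
  obtain ⟨b, hb_ub, hb_lub⟩ := hcomp (range fun z : f.domain => f z - p (z - y))
    (range_nonempty _) ⟨_, forall_mem_range.2 fun z => hsep z 0⟩
  have hextend : ∀ (y' : E) (b' : F), (∀ w : f.domain, b' ≤ p (w + y') - f w) →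
      ∀ r : ℝ, 0 < r → ∀ z : f.domain, f z + r • b' ≤ p (z + r • y') := by
    intro y' b' hb' r hr z
    have h := smul_le_smul_of_nonneg_left (hb' (r⁻¹ • z)) hr.le
    rw [smul_sub, ← hp_smul r hr, f.map_smul, smul_inv_smul₀ hr.ne', smul_add,
      Submodule.coe_smul, smul_inv_smul₀ hr.ne'] at h
    rwa [add_comm, ← le_sub_iff_add_le]
  refine ⟨f.supSpanSingleton y b hy, ?_, ?_⟩
  · refine lt_of_le_not_ge (f.left_le_sup _ _) fun h => hy ?_
    have h := LinearPMap.domain_mono.monotone h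
    rw [LinearPMap.domain_supSpanSingleton, sup_le_iff, Submodule.span_le,
      singleton_subset_iff] at h
    exact h.2
  rintro ⟨_, hz'⟩
  obtain ⟨z, hz, _, hr, rfl⟩ := Submodule.mem_sup.1 (f.domain_supSpanSingleton y b hy ▸ hz')
  obtain ⟨r, rfl⟩ := Submodule.mem_span_singleton.1 hr
  rw [LinearPMap.supSpanSingleton_apply_mk _ _ _ _ _ hz]
  rcases lt_trichotomy r 0 with hr | rfl | hr
  · simpa using hextend (-y) (-b) (fun w => by
      simpa [neg_le, sub_eq_add_neg] using hb_ub ⟨w, rfl⟩) (-r) (neg_pos.2 hr) ⟨z, hz⟩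
  · simpa using hf ⟨z, hz⟩
  · exact hextend y b (fun w => hb_lub (forall_mem_range.2 fun z => hsep z w)) r hr ⟨z, hz⟩

theorem exists_linearMap_le_sublinear
    (hcomp : ∀ S : Set F, S.Nonempty → BddAbove S → ∃ b, IsLUB S b)
    (hp_smul : ∀ c : ℝ, 0 < c → ∀ v, p (c • v) = c • p v)
    (hp_add : ∀ u v, p (u + v) ≤ p u + p v) :
    ∃ g : E →ₗ[ℝ] F, ∀ v, g v ≤ p v := by
  set S := {f : E →ₗ.[ℝ] F | ∀ z : f.domain, f z ≤ p z}
  have hchain : ∀ c ⊆ S, IsChain (· ≤ ·) c → ∀ y ∈ c, ∃ ub ∈ S, ∀ z ∈ c, z ≤ ub := by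
    intro c hcS hc y hy
    have hcd : DirectedOn (· ≤ ·) c := hc.directedOn
    refine ⟨LinearPMap.sSup c hcd, ?_, fun _ => LinearPMap.le_sSup hcd⟩
    rintro ⟨x, hx⟩
    have hdir : DirectedOn (· ≤ ·) (LinearPMap.domain '' c) :=
      directedOn_image.2 (hcd.mono LinearPMap.domain_mono.monotone)
    obtain ⟨_, ⟨f, hfc, rfl⟩, hfx⟩ :=
      (Submodule.mem_sSup_of_directed (Set.Nonempty.image _ ⟨y, hy⟩) hdir).1 hx
    convert hcS hfc ⟨x, hfx⟩ using 1
    exact ((LinearPMap.le_sSup hcd hfc).2 rfl).symm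
  have hp0 : p 0 = 0 := by
    simpa [two_smul] using hp_smul 2 two_pos 0
  have hbot : (0 : E →ₗ[ℝ] F).toPMap ⊥ ∈ S := by
    rintro ⟨z, hz⟩
    obtain rfl := (Submodule.mem_bot ℝ).1 hz
    simp [hp0]
  obtain ⟨q, -, hqS, hqmax⟩ := zorn_le_nonempty₀ S hchain _ hbot
  have hqtop : q.domain = ⊤ := by
    by_contra hne
    obtain ⟨g, hqg, hgS⟩ := q.exists_lt_forall_le_of_sublinear hcomp hp_smul hp_add hqS hne
    exact hqg.not_ge (hqmax hgS hqg.le)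
  exact ⟨q.toFun ∘ₗ (LinearEquiv.ofTop _ hqtop).symm.toLinearMap, fun v => hqS _⟩

end HahnBanach

section DiffQuotient

variable {E F : Type*} [AddCommGroup E] [Module ℝ E] [AddCommGroup F] [Module ℝ F]
  {C : Set E} {Φ : E → F} {x : E}

noncomputable def diffQuot (Φ : E → F) (x v : E) (t : ℝ) : F := t⁻¹ • (Φ (x + t • v) - Φ x)

def diffQuotients (Φ : E → F) (C : Set E) (x v : E) : Set F :=
  diffQuot Φ x v '' {t | 0 < t ∧ x + t • v ∈ C}

@[simp]
theorem diffQuot_zero (x : E) (t : ℝ) : diffQuot Φ x 0 t = 0 := by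
  simp [diffQuot]

theorem diffQuot_smul {c : ℝ} (hc : c ≠ 0) (v : E) (t : ℝ) :
    diffQuot Φ x (c • v) t = c • diffQuot Φ x v (t * c) := by
  rw [diffQuot, diffQuot, smul_smul, smul_smul, mul_inv, mul_left_comm, mul_inv_cancel₀ hc,
    mul_one]

theorem diffQuotients_smul {c : ℝ} (hc : 0 < c) (v : E) :
    diffQuotients Φ C x (c • v) = c • diffQuotients Φ C x v := by
  ext z
  rw [Set.mem_smul_set]
  constructor
  · rintro ⟨t, ⟨ht, htC⟩, rfl⟩
    exact ⟨_, ⟨t * c, ⟨mul_pos ht hc, by rwa [mul_smul]⟩, rfl⟩, (diffQuot_smul hc.ne' v t).symm⟩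
  · rintro ⟨_, ⟨s, ⟨hs, hsC⟩, rfl⟩, rfl⟩
    refine ⟨s / c, ⟨div_pos hs hc, ?_⟩, ?_⟩
    · rwa [smul_smul, div_mul_cancel₀ s hc.ne']
    · rw [diffQuot_smul hc.ne', div_mul_cancel₀ s hc.ne']

theorem map_smul_of_isGLB_diffQuotients [PartialOrder F] [PosSMulMono ℝ F] {p : E → F}
    (hp : ∀ v, IsGLB (diffQuotients Φ C x v) (p v)) {c : ℝ} (hc : 0 < c) (v : E) :
    p (c • v) = c • p v := by
  refine (hp (c • v)).unique ?_
  rw [diffQuotients_smul hc, ← Set.image_smul]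
  exact (OrderIso.smulRight hc).isGLB_image'.2 (hp v)

variable [PartialOrder F] [IsOrderedAddMonoid F]

theorem ConvexOn.map_add_smul_sub_le (hΦ : ConvexOn ℝ C Φ) (hx : x ∈ C) {w : E}
    (hw : x + w ∈ C) {μ : ℝ} (hμ₀ : 0 ≤ μ) (hμ₁ : μ ≤ 1) :
    Φ (x + μ • w) - Φ x ≤ μ • (Φ (x + w) - Φ x) := by
  have h := hΦ.2 hx hw (sub_nonneg.2 hμ₁) hμ₀ (sub_add_cancel 1 μ)
  rw [show (1 - μ) • x + μ • (x + w) = x + μ • w by module] at h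
  calc Φ (x + μ • w) - Φ x ≤ (1 - μ) • Φ x + μ • Φ (x + w) - Φ x := sub_le_sub_right h _
    _ = μ • (Φ (x + w) - Φ x) := by module

variable [PosSMulMono ℝ F]

theorem ConvexOn.diffQuot_mono (hΦ : ConvexOn ℝ C Φ) (hx : x ∈ C) {v : E} {s t : ℝ}
    (hs : 0 < s) (hst : s ≤ t) (ht : x + t • v ∈ C) :
    x + s • v ∈ C ∧ diffQuot Φ x v s ≤ diffQuot Φ x v t := by
  have hts : (s / t) • t • v = s • v := by
    rw [smul_smul, div_mul_cancel₀ s (hs.trans_le hst).ne']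
  have hμ : s / t ∈ Icc (0 : ℝ) 1 :=
    ⟨div_nonneg hs.le (hs.le.trans hst), (div_le_one (hs.trans_le hst)).2 hst⟩
  refine ⟨hts ▸ hΦ.1.add_smul_mem hx ht hμ, ?_⟩
  have h := smul_le_smul_of_nonneg_left (hΦ.map_add_smul_sub_le hx ht hμ.1 hμ.2)
    (inv_nonneg.2 hs.le)
  rwa [hts, smul_smul, inv_mul_eq_div, div_div_cancel_left' hs.ne'] at h

theorem ConvexOn.diffQuot_add_le (hΦ : ConvexOn ℝ C Φ) {u v : E} {r : ℝ} (hr : 0 < r)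
    (hu : x + r • u ∈ C) (hv : x + r • v ∈ C) :
    x + (r / 2) • (u + v) ∈ C ∧
      diffQuot Φ x (u + v) (r / 2) ≤ diffQuot Φ x u r + diffQuot Φ x v r := by
  have hmid : (2⁻¹ : ℝ) • (x + r • u) + (2⁻¹ : ℝ) • (x + r • v) = x + (r / 2) • (u + v) := by
    module
  have hhalf : (0 : ℝ) ≤ 2⁻¹ := by norm_num
  have h := hΦ.2 hu hv hhalf hhalf (by norm_num)
  rw [hmid] at h
  refine ⟨hmid ▸ hΦ.1 hu hv hhalf hhalf (by norm_num), ?_⟩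
  calc diffQuot Φ x (u + v) (r / 2)
      ≤ (r / 2)⁻¹ • ((2⁻¹ : ℝ) • Φ (x + r • u) + (2⁻¹ : ℝ) • Φ (x + r • v) - Φ x) :=
        smul_le_smul_of_nonneg_left (sub_le_sub_right h _) (by positivity)
    _ = diffQuot Φ x u r + diffQuot Φ x v r := by
        simp only [diffQuot]
        module

theorem ConvexOn.exists_diffQuotients_le_add (hΦ : ConvexOn ℝ C Φ) (hx : x ∈ C) {u v : E}
    {a b : F} (ha : a ∈ diffQuotients Φ C x u) (hb : b ∈ diffQuotients Φ C x v) :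
    ∃ c ∈ diffQuotients Φ C x (u + v), c ≤ a + b := by
  obtain ⟨s, ⟨hs, hsC⟩, rfl⟩ := ha
  obtain ⟨t, ⟨ht, htC⟩, rfl⟩ := hb
  have hr : 0 < min s t := lt_min hs ht
  obtain ⟨hsu, hus⟩ := hΦ.diffQuot_mono hx hr (min_le_left s t) hsC
  obtain ⟨htv, hvt⟩ := hΦ.diffQuot_mono hx hr (min_le_right s t) htC
  obtain ⟨hmem, hle⟩ := hΦ.diffQuot_add_le hr hsu htv
  exact ⟨_, ⟨_, ⟨half_pos hr, hmem⟩, rfl⟩, hle.trans (add_le_add hus hvt)⟩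

theorem ConvexOn.bddBelow_diffQuotients (hΦ : ConvexOn ℝ C Φ) (hx : x ∈ C) {v : E}
    (hne : (diffQuotients Φ C x (-v)).Nonempty) : BddBelow (diffQuotients Φ C x v) := by
  obtain ⟨a, ha⟩ := hne
  refine ⟨-a, fun b hb => ?_⟩
  obtain ⟨_, ⟨t, -, rfl⟩, hle⟩ := hΦ.exists_diffQuotients_le_add hx ha hb
  rw [neg_add_cancel, diffQuot_zero] at hle
  exact neg_le_iff_add_nonneg'.2 hle

theorem ConvexOn.map_add_le_of_isGLB_diffQuotients (hΦ : ConvexOn ℝ C Φ) (hx : x ∈ C)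
    {p : E → F} (hp : ∀ v, IsGLB (diffQuotients Φ C x v) (p v)) (u v : E) :
    p (u + v) ≤ p u + p v := by
  refine ((hp u).add (hp v)).2 ?_
  rintro _ ⟨a, ha, b, hb, rfl⟩
  obtain ⟨c, hc, hle⟩ := hΦ.exists_diffQuotients_le_add hx ha hb
  exact ((hp (u + v)).1 hc).trans hle

end DiffQuotient

section Topology

theorem exists_pos_add_smul_mem {E : Type*} [AddCommGroup E] [Module ℝ E] [TopologicalSpace E]
    [ContinuousAdd E] [ContinuousSMul ℝ E] {C : Set E} {x : E} (hC : C ∈ 𝓝 x) (v : E) :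
    ∃ t : ℝ, 0 < t ∧ x + t • v ∈ C := by
  have h : Tendsto (fun t : ℝ => x + t • v) (𝓝[>] 0) (𝓝 x) := by
    have hcont : Continuous fun t : ℝ => x + t • v := by fun_prop
    simpa using (hcont.tendsto 0).mono_left nhdsWithin_le_nhds
  exact (eventually_mem_nhdsWithin.and (h.eventually hC)).exists

theorem ConvexOn.exists_linearMap_le_sub {E F : Type*} [AddCommGroup E] [Module ℝ E]
    [TopologicalSpace E] [ContinuousAdd E] [ContinuousSMul ℝ E]
    [AddCommGroup F] [PartialOrder F] [IsOrderedAddMonoid F] [Module ℝ F] [PosSMulMono ℝ F]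
    (hcomp : ∀ S : Set F, S.Nonempty → BddAbove S → ∃ b, IsLUB S b)
    {C : Set E} {Φ : E → F} {x : E} (hΦ : ConvexOn ℝ C Φ) (hC : C ∈ 𝓝 x) :
    ∃ g : E →ₗ[ℝ] F, ∀ y ∈ C, g (y - x) ≤ Φ y - Φ x := by
  have hx := mem_of_mem_nhds hC
  have hne (v : E) : (diffQuotients Φ C x v).Nonempty :=
    Set.Nonempty.image _ (exists_pos_add_smul_mem hC v)
  choose p hp using fun v => exists_isGLB_of_exists_isLUB hcomp (hne v)
    (hΦ.bddBelow_diffQuotients hx (hne (-v)))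
  obtain ⟨g, hg⟩ := exists_linearMap_le_sublinear hcomp
    (fun c hc => map_smul_of_isGLB_diffQuotients hp hc) (hΦ.map_add_le_of_isGLB_diffQuotients hx hp)
  refine ⟨g, fun y hy => (hg _).trans ((hp _).1 ⟨1, ⟨one_pos, ?_⟩, ?_⟩)⟩
  · simpa using hy
  · simp [diffQuot]

theorem tendsto_zero_of_le_of_le {α F : Type*} [NormedAddCommGroup F] [PartialOrder F]
    [IsOrderedAddMonoid F]
    (hmono : ∀ a b : F, 0 ≤ a → a ≤ b → ‖a‖ ≤ ‖b‖) {L : Filter α} {f l u : α → F}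
    (hl : Tendsto l L (𝓝 0)) (hu : Tendsto u L (𝓝 0))
    (hlf : ∀ᶠ i in L, l i ≤ f i) (hfu : ∀ᶠ i in L, f i ≤ u i) : Tendsto f L (𝓝 0) := by
  refine squeeze_zero_norm' (a := fun i => ‖u i - l i‖ + ‖l i‖) ?_ ?_
  · filter_upwards [hlf, hfu] with i hli hiu
    calc ‖f i‖ ≤ ‖f i - l i‖ + ‖l i‖ := norm_le_norm_sub_add _ _
      _ ≤ ‖u i - l i‖ + ‖l i‖ := by
        gcongr
        exact hmono _ _ (sub_nonneg.2 hli) (sub_le_sub_right hiu _)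
  · simpa using (hu.sub hl).norm.add hl.norm

theorem continuous_of_le_sub_of_continuousAt {E F G : Type*} [AddCommGroup E]
    [TopologicalSpace E] [IsTopologicalAddGroup E] [NormedAddCommGroup F] [PartialOrder F]
    [IsOrderedAddMonoid F] [FunLike G E F] [AddMonoidHomClass G E F]
    (hmono : ∀ a b : F, 0 ≤ a → a ≤ b → ‖a‖ ≤ ‖b‖) {C : Set E} {Φ : E → F} {x : E}
    (hC : C ∈ 𝓝 x) (hΦ : ContinuousAt Φ x) (g : G) (hg : ∀ y ∈ C, g (y - x) ≤ Φ y - Φ x) :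
    Continuous g := by
  refine continuous_of_continuousAt_zero g ?_
  rw [ContinuousAt, map_zero]
  have hadd : Tendsto (fun v => x + v) (𝓝 0) (𝓝 x) := by
    simpa using ((by fun_prop : Continuous fun v : E => x + v).tendsto 0)
  have hsub : Tendsto (fun v => x - v) (𝓝 0) (𝓝 x) := by
    simpa using ((by fun_prop : Continuous fun v : E => x - v).tendsto 0)
  refine tendsto_zero_of_le_of_le hmono (l := fun v => Φ x - Φ (x - v))
    (u := fun v => Φ (x + v) - Φ x) ?_ ?_ ?_ ?_
  · simpa using ((hΦ.tendsto.comp hsub).const_sub (Φ x))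
  · simpa using ((hΦ.tendsto.comp hadd).sub_const (Φ x))
  · filter_upwards [hsub.eventually hC] with v hv
    simpa [neg_le, neg_sub] using hg _ hv
  · filter_upwards [hadd.eventually hC] with v hv
    simpa using hg _ hv

end Topology

theorem convex_eq_sup_of_affine_minorants_general
    {E F : Type*}
    [NormedAddCommGroup E] [NormedSpace ℝ E]
    [NormedAddCommGroup F] [NormedSpace ℝ F]
    [PartialOrder F] [CovariantClass F F (· + ·) (· ≤ ·)]
    (hsmulF : ∀ (c : ℝ) (x : F), 0 ≤ c → 0 ≤ x → 0 ≤ c • x)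
    (hmonoF : ∀ x y : F, 0 ≤ x → x ≤ y → ‖x‖ ≤ ‖y‖)
    (hcompF : ∀ S : Set F, S.Nonempty → BddAbove S → ∃ b, IsLUB S b)
    {C : Set E} (hCconv : Convex ℝ C) (hCopen : IsOpen C) (Φ : E → F)
    (hconv : ∀ x ∈ C, ∀ y ∈ C, ∀ t : ℝ, 0 ≤ t → t ≤ 1 →
      Φ ((1 - t) • x + t • y) ≤ (1 - t) • Φ x + t • Φ y)
    (hcont : ContinuousOn Φ C) :
    ∀ x ∈ C, IsLUB {z : F | ∃ (T : E →L[ℝ] F) (c : F),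
      (∀ y ∈ C, T y + c ≤ Φ y) ∧ z = T x + c} (Φ x) := by
  have : IsOrderedAddMonoid F := { add_le_add_left := fun _ _ h c => add_le_add_left h c }
  have : PosSMulMono ℝ F := .of_smul_nonneg fun c hc b hb => hsmulF c b hc hb
  have hΦ : ConvexOn ℝ C Φ := by
    refine ⟨hCconv, fun x hx y hy a b ha hb hab => ?_⟩
    obtain rfl : a = 1 - b := eq_sub_of_add_eq hab
    exact hconv x hx y hy b hb (by linarith)
  intro x hx
  have hC := hCopen.mem_nhds hx
  obtain ⟨g, hg⟩ := hΦ.exists_linearMap_le_sub hcompF hC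
  have hg_cont := continuous_of_le_sub_of_continuousAt hmonoF hC (hcont.continuousAt hC) g hg
  refine ⟨fun _ ⟨T, c, hTc, hz⟩ => hz ▸ hTc x hx,
    fun b hb => hb ⟨⟨g, hg_cont⟩, Φ x - g x, ?_, ?_⟩⟩
  · intro y hy
    have h := hg y hy
    rw [map_sub] at h
    calc g y + (Φ x - g x) = (g y - g x) + Φ x := by abel
      _ ≤ (Φ y - Φ x) + Φ x := by gcongr
      _ = Φ y := sub_add_cancel _ _
  · simp

/-- On an open convex set `C` in a Banach space, a continuous convex
function with values in an order complete Banach space is the upper envelope of its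
continuous affine minorants. -/
theorem convex_eq_sup_of_affine_minorants
    {E F : Type*}
    [NormedAddCommGroup E] [NormedSpace ℝ E] [CompleteSpace E]
    [NormedAddCommGroup F] [NormedSpace ℝ F] [CompleteSpace F]
    [PartialOrder F] [CovariantClass F F (· + ·) (· ≤ ·)]
    (hsmulF : ∀ (c : ℝ) (x : F), 0 ≤ c → 0 ≤ x → 0 ≤ c • x)
    (hclosedF : IsClosed {x : F | 0 ≤ x})
    (hgenF : ∀ x : F, ∃ u v : F, 0 ≤ u ∧ 0 ≤ v ∧ x = u - v)
    (hmonoF : ∀ x y : F, 0 ≤ x → x ≤ y → ‖x‖ ≤ ‖y‖)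
    (hcompF : ∀ S : Set F, S.Nonempty → BddAbove S → ∃ b, IsLUB S b)
    {C : Set E} (hCconv : Convex ℝ C) (hCopen : IsOpen C) (Φ : E → F)
    (hconv : ∀ x ∈ C, ∀ y ∈ C, ∀ t : ℝ, 0 ≤ t → t ≤ 1 →
      Φ ((1 - t) • x + t • y) ≤ (1 - t) • Φ x + t • Φ y)
    (hcont : ContinuousOn Φ C) :
    ∀ x ∈ C, IsLUB {z : F | ∃ (T : E →L[ℝ] F) (c : F),
      (∀ y ∈ C, T y + c ≤ Φ y) ∧ z = T x + c} (Φ x) :=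
  convex_eq_sup_of_affine_minorants_general hsmulF hmonoF hcompF hCconv hCopen Φ hconv hcont
end

section
/- Let E be an ordered real vector space with positive cone E₊, let F be an order complete vector lattice, and let Ψ : E₊ → F be a convex function. Then for every linear operator S : E → F the following two assertions are equivalent: (a) there exist two positive linear operators T, U : E → F such that S = T - U and T(x) ≤ Ψ(x) for all x ∈ E₊; (b) S(x₁) ≤ Ψ(x₂) for all x₁, x₂ ∈ E such that 0 ≤ x₁ ≤ x₂. -/
/-!
Condition (b) says that the map `p x = inf {l • Ψ a - S b | l ≥ 0, 0 ≤ a, 0 ≤ b, x ≤ l • a - b}`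
satisfies `p 0 ≥ 0`; convexity of `Ψ` makes `p` sublinear. Since `p` may take the value `+∞`
we work with its epigraph `dominationSet Ψ S`, a convex cone in `E × F`. The Hahn–Banach–Kantorovich
theorem (Zorn's lemma over partial linear maps, each one-dimensional extension step being possible
because `F` is order complete) gives a linear `T ≤ p`. Testing `T` against the points
`(x, Ψ x)`, `(-x, 0)` and `(-x, -S x)` of the epigraph, for `x ≥ 0`, yields `T ≤ Ψ`, `0 ≤ T`
and `S ≤ T` on `E₊`, so `S = T - (T - S)` is the required decomposition.
-/

open Set Submodule

theorem exists_between_of_forall_le_of_exists_isLUB {F : Type*} [Preorder F] [Nonempty F]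
    (hcomp : ∀ s : Set F, s.Nonempty → BddAbove s → ∃ b, IsLUB s b) {L R : Set F}
    (hLR : ∀ a ∈ L, ∀ b ∈ R, a ≤ b) (hne : L.Nonempty ↔ R.Nonempty) :
    (upperBounds L ∩ lowerBounds R).Nonempty := by
  rcases L.eq_empty_or_nonempty with rfl | hL
  · obtain rfl : R = ∅ := not_nonempty_iff_eq_empty.1 (by simpa using hne)
    simp
  · obtain ⟨b₀, hb₀⟩ := hne.1 hL
    obtain ⟨c, hc⟩ := hcomp L hL ⟨b₀, fun a ha => hLR a ha b₀ hb₀⟩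
    exact ⟨c, hc.1, fun b hb => hc.2 fun a ha => hLR a ha b hb⟩

namespace LinearPMap

variable {E F : Type*} [AddCommGroup E] [Module ℝ E] [AddCommGroup F] [PartialOrder F] [Module ℝ F]

def DominatedBy (f : E →ₗ.[ℝ] F) (C : Set (E × F)) : Prop :=
  ∀ (y : f.domain) (g : F), ((y : E), g) ∈ C → f y ≤ g

def StepDominatedBy (f : E →ₗ.[ℝ] F) (C : Set (E × F)) (v : E) (c : F) : Prop :=
  ∀ (y : f.domain) (g : F), ((y : E) + v, g) ∈ C → f y + c ≤ g

theorem dominatedBy_sSup {C : Set (E × F)} {c : Set (E →ₗ.[ℝ] F)} (hc : DirectedOn (· ≤ ·) c)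
    (hne : c.Nonempty) (h : ∀ f ∈ c, f.DominatedBy C) : (LinearPMap.sSup c hc).DominatedBy C := by
  rintro ⟨x, hx⟩ g hg
  obtain ⟨f, hfc, hfx⟩ := (mem_domain_sSup_iff hne hc).1 hx
  exact (LinearPMap.sSup_apply hc hfc ⟨x, hfx⟩).trans_le (h f hfc _ g hg)

variable {f : E →ₗ.[ℝ] F} {C : ConvexCone ℝ (E × F)} {v : E} {c : F}

section PosSMulMono

variable [PosSMulMono ℝ F]

theorem StepDominatedBy.add_smul_le (hc : f.StepDominatedBy C v c) {r : ℝ} (hr : 0 < r)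
    (x : f.domain) {g : F} (hg : ((x : E) + r • v, g) ∈ C) : f x + r • c ≤ g := by
  have hmem : ((↑(r⁻¹ • x) : E) + v, r⁻¹ • g) ∈ C := by
    convert C.smul_mem (inv_pos.2 hr) hg using 1
    simp [smul_add, smul_smul, inv_mul_cancel₀ hr.ne']
  have := smul_le_smul_of_nonneg_left (hc _ _ hmem) hr.le
  rwa [map_smul, smul_add, smul_smul, smul_smul, mul_inv_cancel₀ hr.ne', one_smul,
    one_smul] at this

theorem DominatedBy.supSpanSingleton (hf : f.DominatedBy C) (hv : v ∉ f.domain)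
    (hpos : f.StepDominatedBy C v c) (hneg : f.StepDominatedBy C (-v) (-c)) :
    (f.supSpanSingleton v c hv).DominatedBy C := by
  rintro ⟨z, hz⟩ g hg
  obtain ⟨x, hx, _, hy, rfl⟩ := mem_sup.1 hz
  obtain ⟨r, rfl⟩ := mem_span_singleton.1 hy
  rw [supSpanSingleton_apply_mk _ _ _ _ _ hx]
  rcases lt_trichotomy r 0 with hr | rfl | hr
  · simpa using hneg.add_smul_le (neg_pos.2 hr) ⟨x, hx⟩ (by simpa using hg)
  · simpa using hf ⟨x, hx⟩ g (by simpa using hg)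
  · exact hpos.add_smul_le hr ⟨x, hx⟩ hg

end PosSMulMono

theorem DominatedBy.exists_stepDominatedBy [IsOrderedAddMonoid F] (hf : f.DominatedBy C)
    (hcomp : ∀ s : Set F, s.Nonempty → BddAbove s → ∃ b, IsLUB s b)
    (hneg : ∀ p ∈ C, ∃ g, (-p.1, g) ∈ C) (v : E) :
    ∃ c, f.StepDominatedBy C v c ∧ f.StepDominatedBy C (-v) (-c) := by
  set L := {a | ∃ (y : f.domain) (g : F), ((y : E) + -v, g) ∈ C ∧ a = f y - g}
  set R := {b | ∃ (y : f.domain) (g : F), ((y : E) + v, g) ∈ C ∧ b = g - f y}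
  have hLR : ∀ a ∈ L, ∀ b ∈ R, a ≤ b := by
    rintro _ ⟨y, g, hg, rfl⟩ _ ⟨y', g', hg', rfl⟩
    have hsum : ((↑(y + y') : E), g + g') ∈ C := by
      convert C.add_mem hg hg' using 1
      rw [Prod.mk_add_mk, coe_add]
      congr 1
      abel
    have := hf _ _ hsum
    rw [map_add] at this
    rw [sub_le_sub_iff]
    simpa [add_comm g] using this
  have hne : L.Nonempty ↔ R.Nonempty := by
    constructor <;>
    · rintro ⟨_, y, g, hg, -⟩
      obtain ⟨g', hg'⟩ := hneg _ hg
      exact ⟨_, -y, g', by simpa [add_comm] using hg', rfl⟩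
  obtain ⟨c, hcL, hcR⟩ := exists_between_of_forall_le_of_exists_isLUB hcomp hLR hne
  refine ⟨c, fun y g hg => ?_, fun y g hg => ?_⟩
  · simpa [le_sub_iff_add_le'] using hcR ⟨y, g, hg, rfl⟩
  · simpa [sub_le_iff_le_add, add_comm c] using hcL ⟨y, g, hg, rfl⟩

theorem DominatedBy.exists_gt [IsOrderedAddMonoid F] [PosSMulMono ℝ F] (hf : f.DominatedBy C)
    (hcomp : ∀ s : Set F, s.Nonempty → BddAbove s → ∃ b, IsLUB s b)
    (hneg : ∀ p ∈ C, ∃ g, (-p.1, g) ∈ C) (hdom : f.domain ≠ ⊤) :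
    ∃ f', f < f' ∧ f'.DominatedBy C := by
  obtain ⟨v, -, hv⟩ := SetLike.exists_of_lt (lt_top_iff_ne_top.2 hdom)
  obtain ⟨c, hpos, hneg⟩ := hf.exists_stepDominatedBy hcomp hneg v
  refine ⟨f.supSpanSingleton v c hv, lt_iff_le_not_ge.2 ⟨f.left_le_sup _ _, fun H => ?_⟩,
    hf.supSpanSingleton hv hpos hneg⟩
  replace H := domain_mono.monotone H
  rw [domain_supSpanSingleton, sup_le_iff, span_le, singleton_subset_iff] at H
  exact hv H.2

end LinearPMap

namespace ConvexCone

variable {E F : Type*} [AddCommGroup E] [Module ℝ E]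
  [AddCommGroup F] [PartialOrder F] [IsOrderedAddMonoid F] [Module ℝ F] [PosSMulMono ℝ F]

theorem exists_linearMap_le (C : ConvexCone ℝ (E × F))
    (hcomp : ∀ s : Set F, s.Nonempty → BddAbove s → ∃ b, IsLUB s b)
    (hzero : ∀ g, ((0 : E), g) ∈ C → 0 ≤ g) (hneg : ∀ p ∈ C, ∃ g, (-p.1, g) ∈ C) :
    ∃ T : E →ₗ[ℝ] F, ∀ p ∈ C, T p.1 ≤ p.2 := by
  have hzero_dom : ((0 : E →ₗ[ℝ] F).toPMap ⊥).DominatedBy C := by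
    rintro ⟨x, hx⟩ g hg
    obtain rfl : x = 0 := mem_bot ℝ |>.1 hx
    simpa using hzero g hg
  obtain ⟨q, -, hq, hmax⟩ := zorn_le_nonempty₀ {f : E →ₗ.[ℝ] F | f.DominatedBy C}
    (fun c hc hchain _ hy => ⟨_, LinearPMap.dominatedBy_sSup hchain.directedOn ⟨_, hy⟩ hc,
      fun _ => LinearPMap.le_sSup _⟩) _ hzero_dom
  have htop : q.domain = ⊤ := by
    by_contra hdom
    obtain ⟨f', hqf', hf'⟩ := hq.exists_gt hcomp hneg hdom
    exact hqf'.not_ge (hmax hf' hqf'.le)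
  exact ⟨q.toFun ∘ₗ (LinearEquiv.ofTop _ htop).symm.toLinearMap, fun p hp => hq _ _ hp⟩

end ConvexCone

theorem ConvexOn.exists_smul_add_smul_le {E F : Type*} [AddCommMonoid E] [Module ℝ E]
    [AddCommMonoid F] [PartialOrder F] [Module ℝ F] [PosSMulMono ℝ F] {s : Set E} {Ψ : E → F}
    (hΨ : ConvexOn ℝ s Ψ) {a c : E} (ha : a ∈ s) (hc : c ∈ s) {l m : ℝ} (hl : 0 ≤ l)
    (hm : 0 ≤ m) : ∃ w ∈ s, (l + m) • w = l • a + m • c ∧ (l + m) • Ψ w ≤ l • Ψ a + m • Ψ c := by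
  rcases (add_nonneg hl hm).eq_or_lt with hlm | hlm
  · obtain rfl : l = 0 := by linarith
    obtain rfl : m = 0 := by linarith
    exact ⟨a, ha, by simp, by simp⟩
  · have hsum : l / (l + m) + m / (l + m) = 1 := by field_simp
    have hl' : (l + m) * (l / (l + m)) = l := mul_div_cancel₀ _ hlm.ne'
    have hm' : (l + m) * (m / (l + m)) = m := mul_div_cancel₀ _ hlm.ne'
    refine ⟨(l / (l + m)) • a + (m / (l + m)) • c,
      hΨ.1 ha hc (by positivity) (by positivity) hsum,
      by simp only [smul_add, smul_smul, hl', hm'], ?_⟩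
    calc (l + m) • Ψ ((l / (l + m)) • a + (m / (l + m)) • c)
        ≤ (l + m) • ((l / (l + m)) • Ψ a + (m / (l + m)) • Ψ c) :=
          smul_le_smul_of_nonneg_left (hΨ.2 ha hc (by positivity) (by positivity) hsum) hlm.le
      _ = l • Ψ a + m • Ψ c := by simp only [smul_add, smul_smul, hl', hm']

section DominationSet

variable {E F : Type*} [AddCommGroup E] [PartialOrder E] [Module ℝ E]
  [AddCommGroup F] [PartialOrder F] [Module ℝ F] {Ψ : E → F} {S : E →ₗ[ℝ] F}

def dominationSet (Ψ : E → F) (S : E →ₗ[ℝ] F) : Set (E × F) :=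
  {p | ∃ l : ℝ, ∃ a b : E, 0 ≤ l ∧ 0 ≤ a ∧ 0 ≤ b ∧ p.1 ≤ l • a - b ∧ l • Ψ a - S b ≤ p.2}

theorem exists_neg_mem_dominationSet [IsOrderedAddMonoid E] [PosSMulMono ℝ E] {p : E × F}
    (hp : p ∈ dominationSet Ψ S) :
    ∃ g, (-p.1, g) ∈ dominationSet Ψ S := by
  obtain ⟨l, a, b, hl, ha, hb, hx, -⟩ := hp
  exact ⟨_, 1, (l • a - b - p.1) + b, l • a, zero_le_one, add_nonneg (sub_nonneg.2 hx) hb,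
    smul_nonneg hl ha, le_of_eq (by module), le_rfl⟩

variable [IsOrderedAddMonoid F] [PosSMulMono ℝ F]

theorem smul_mem_dominationSet [PosSMulMono ℝ E] {r : ℝ} (hr : 0 ≤ r) {p : E × F}
    (hp : p ∈ dominationSet Ψ S) :
    r • p ∈ dominationSet Ψ S := by
  obtain ⟨l, a, b, hl, ha, hb, hx, hg⟩ := hp
  refine ⟨r * l, a, r • b, mul_nonneg hr hl, ha, smul_nonneg hr hb, ?_, ?_⟩
  · simpa [smul_sub, smul_smul] using smul_le_smul_of_nonneg_left hx hr
  · simpa [smul_sub, smul_smul] using smul_le_smul_of_nonneg_left hg hr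

theorem add_mem_dominationSet [IsOrderedAddMonoid E] (hΨ : ConvexOn ℝ (Ici 0) Ψ) {p q : E × F}
    (hp : p ∈ dominationSet Ψ S) (hq : q ∈ dominationSet Ψ S) : p + q ∈ dominationSet Ψ S := by
  obtain ⟨l, a, b, hl, ha, hb, hx, hg⟩ := hp
  obtain ⟨m, c, d, hm, hc, hd, hy, hh⟩ := hq
  obtain ⟨w, hw, hwa, hwΨ⟩ := hΨ.exists_smul_add_smul_le ha hc hl hm
  refine ⟨l + m, w, b + d, add_nonneg hl hm, hw, add_nonneg hb hd, ?_, ?_⟩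
  · calc p.1 + q.1 ≤ (l • a - b) + (m • c - d) := add_le_add hx hy
      _ = (l + m) • w - (b + d) := by rw [hwa]; abel
  · calc (l + m) • Ψ w - S (b + d) ≤ (l • Ψ a + m • Ψ c) - S (b + d) := sub_le_sub_right hwΨ _
      _ = (l • Ψ a - S b) + (m • Ψ c - S d) := by rw [map_add]; abel
      _ ≤ p.2 + q.2 := add_le_add hg hh

variable [IsOrderedAddMonoid E] [PosSMulMono ℝ E]

def dominationCone (S : E →ₗ[ℝ] F) (hΨ : ConvexOn ℝ (Ici 0) Ψ) : ConvexCone ℝ (E × F) where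
  carrier := dominationSet Ψ S
  smul_mem' _ hr _ hp := smul_mem_dominationSet hr.le hp
  add_mem' _ hp _ hq := add_mem_dominationSet hΨ hp hq

theorem nonneg_of_zero_mem_dominationSet (hS : ∀ x₁ x₂ : E, 0 ≤ x₁ → x₁ ≤ x₂ → S x₁ ≤ Ψ x₂)
    {g : F} (hg : ((0 : E), g) ∈ dominationSet Ψ S) : 0 ≤ g := by
  obtain ⟨l, a, b, hl, ha, hb, hx, hg⟩ := hg
  have hba : b ≤ l • a := sub_nonneg.1 hx
  refine le_trans (sub_nonneg.2 ?_) hg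
  rcases hl.eq_or_lt with rfl | hl
  · obtain rfl : b = 0 := le_antisymm (by simpa using hba) hb
    simp
  · have h := smul_le_smul_of_nonneg_left (hS (l⁻¹ • b) a (smul_nonneg (inv_nonneg.2 hl.le) hb)
      ((inv_smul_le_iff_of_pos hl).2 hba)) hl.le
    rwa [map_smul, smul_inv_smul₀ hl.ne'] at h

theorem exists_eq_sub_of_apply_le (hcomp : ∀ s : Set F, s.Nonempty → BddAbove s → ∃ b, IsLUB s b)
    (hΨ : ConvexOn ℝ (Ici 0) Ψ) (hS : ∀ x₁ x₂ : E, 0 ≤ x₁ → x₁ ≤ x₂ → S x₁ ≤ Ψ x₂) :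
    ∃ T U : E →ₗ[ℝ] F, (∀ x : E, 0 ≤ x → 0 ≤ T x) ∧ (∀ x : E, 0 ≤ x → 0 ≤ U x) ∧
      S = T - U ∧ ∀ x : E, 0 ≤ x → T x ≤ Ψ x := by
  obtain ⟨T, hT⟩ := (dominationCone S hΨ).exists_linearMap_le hcomp
    (fun _ => nonneg_of_zero_mem_dominationSet hS) (fun _ => exists_neg_mem_dominationSet)
  have hST : ∀ x : E, 0 ≤ x → S x ≤ T x := fun x hx => by
    simpa using hT (-x, -S x) ⟨0, 0, x, le_rfl, le_rfl, hx, by simp, by simp⟩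
  refine ⟨T, T - S, fun x hx => ?_, fun x hx => sub_nonneg.2 (hST x hx), by abel, fun x hx => ?_⟩
  · simpa using hT (-x, 0) ⟨0, 0, 0, le_rfl, le_rfl, le_rfl, by simpa using hx, by simp⟩
  · simpa using hT (x, Ψ x) ⟨1, x, 0, zero_le_one, hx, le_rfl, by simp, by simp⟩

end DominationSet

/-- (Lemma 4) Let `E` be an ordered real vector space, `F` an order
complete vector lattice and `Ψ : E₊ → F` convex. A linear operator `S : E → F` decomposes
as `S = T - U` with `T, U` positive and `T ≤ Ψ` on `E₊` if and only if `S x₁ ≤ Ψ x₂`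
whenever `0 ≤ x₁ ≤ x₂`. -/
theorem controlled_regularity
    {E F : Type*}
    [AddCommGroup E] [Module ℝ E] [PartialOrder E]
    [CovariantClass E E (· + ·) (· ≤ ·)]
    (hsmulE : ∀ (c : ℝ) (x : E), 0 ≤ c → 0 ≤ x → 0 ≤ c • x)
    [AddCommGroup F] [Module ℝ F] [Lattice F]
    [CovariantClass F F (· + ·) (· ≤ ·)]
    (hsmulF : ∀ (c : ℝ) (x : F), 0 ≤ c → 0 ≤ x → 0 ≤ c • x)
    (hcompF : ∀ S : Set F, S.Nonempty → BddAbove S → ∃ b, IsLUB S b)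
    (Ψ : E → F)
    (hconv : ∀ x y : E, 0 ≤ x → 0 ≤ y → ∀ t : ℝ, 0 ≤ t → t ≤ 1 →
      Ψ ((1 - t) • x + t • y) ≤ (1 - t) • Ψ x + t • Ψ y)
    (S : E →ₗ[ℝ] F) :
    (∃ T U : E →ₗ[ℝ] F, (∀ x : E, 0 ≤ x → 0 ≤ T x) ∧ (∀ x : E, 0 ≤ x → 0 ≤ U x) ∧
        S = T - U ∧ ∀ x : E, 0 ≤ x → T x ≤ Ψ x) ↔
      (∀ x₁ x₂ : E, 0 ≤ x₁ → x₁ ≤ x₂ → S x₁ ≤ Ψ x₂) := by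
  have : IsOrderedAddMonoid E := { add_le_add_left := fun _ _ h c => add_le_add_left h c }
  have : IsOrderedAddMonoid F := { add_le_add_left := fun _ _ h c => add_le_add_left h c }
  have : PosSMulMono ℝ E := .of_smul_nonneg fun c hc x hx => hsmulE c x hc hx
  have : PosSMulMono ℝ F := .of_smul_nonneg fun c hc x hx => hsmulF c x hc hx
  have hΨ : ConvexOn ℝ (Ici 0) Ψ := ⟨convex_Ici 0, fun x hx y hy a b ha hb hab => by
    obtain rfl : a = 1 - b := by linarith
    exact hconv x y hx hy b hb (by linarith)⟩
  refine ⟨?_, exists_eq_sub_of_apply_le hcompF hΨ⟩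
  rintro ⟨T, U, hT, hU, rfl, hTΨ⟩ x₁ x₂ h₁ h₁₂
  calc (T - U) x₁ ≤ T x₁ := sub_le_self _ (hU x₁ h₁)
    _ ≤ T x₂ := sub_nonneg.1 (by simpa using hT _ (sub_nonneg.2 h₁₂))
    _ ≤ Ψ x₂ := hTΨ x₂ (h₁.trans h₁₂)
end
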